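/- There is a satisfiability-preserving polynomial translation from FO sentences over a signature with one unary function f and equality (with all atoms flattened to f(x) ≈ y or x ≈ y) to prenex SL(1) sentences, obtained by conjoining the axiom ∀x. alloc(x) and replacing each atom f(x) ≈ y by x ↪ y: a flattened FO sentence φ has a finite model iff its translation has a finite SL model. -/

import Mathlib

def dom1 {L : Type} (h : L → Option L) : Set L := {l | h l ≠ none}
def img1 {L : Type} (h : L → Option L) : Set L := {l | ∃ l', h l' = some l}
def elem1 {L : Type} (h : L → Option L) : Set L := dom1 h ∪ img1 h

/-- Flattened first-order formulae over one unary function symbol f and equality: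
all atoms are of the form f(x) ≈ y or x ≈ y. -/
inductive FO1 where
  | eqf (x y : ℕ)   -- f(x) ≈ y
  | eq (x y : ℕ)    -- x ≈ y
  | neg (φ : FO1)
  | conj (φ ψ : FO1)
  | ex (x : ℕ) (φ : FO1)
  | all (x : ℕ) (φ : FO1)

/-- FO satisfaction over a structure with universe D and unary function f. -/
def foSat {L : Type} (D : Set L) (f : L → L) : (ℕ → L) → FO1 → Prop
  | s, .eqf x y => f (s x) = s y
  | s, .eq x y => s x = s y
  | s, .neg φ => ¬ foSat D f s φ
  | s, .conj φ ψ => foSat D f s φ ∧ foSat D f s ψ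
  | s, .ex x φ => ∃ e ∈ D, foSat D f (Function.update s x e) φ
  | s, .all x φ => ∀ e ∈ D, foSat D f (Function.update s x e) φ

/-- SL(1) satisfaction of the translation, where each atom f(x) ≈ y has been
replaced by x ↪ y; quantifiers range over the universe. -/
def slSat {L : Type} (U : Set L) (h : L → Option L) : (ℕ → L) → FO1 → Prop
  | s, .eqf x y => h (s x) = some (s y)   -- x ↪ y
  | s, .eq x y => s x = s y
  | s, .neg φ => ¬ slSat U h s φ
  | s, .conj φ ψ => slSat U h s φ ∧ slSat U h s ψ
  | s, .ex x φ => ∃ e ∈ U, slSat U h (Function.update s x e) φ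
  | s, .all x φ => ∀ e ∈ U, slSat U h (Function.update s x e) φ

/-!
When the heap is allocated everywhere on the universe it is the graph of a total function
`f` there, i.e. `h = some ∘ f` on the universe, and then `x ↪ y` and `f(x) ≈ y` have the same
meaning, so FO and SL satisfaction agree by induction on the formula. A finite FO structure
gives such a heap by restricting `f` to its universe; conversely a heap allocated on all of a
finite universe `U` that contains its image reads off a function `U → U`.
-/

variable {L : Type}

lemma forall_update_mem {D : Set L} {s : ℕ → L} (hs : ∀ x, s x ∈ D) (x : ℕ) {e : L}
    (he : e ∈ D) (y : ℕ) : Function.update s x e y ∈ D :=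
  (Function.forall_update_iff s fun _ l => l ∈ D).2 ⟨he, fun y _ => hs y⟩ y

theorem foSat_iff_slSat {D : Set L} {f : L → L} {h : L → Option L}
    (hfh : ∀ l ∈ D, h l = some (f l)) {s : ℕ → L} (hs : ∀ x, s x ∈ D) (φ : FO1) :
    foSat D f s φ ↔ slSat D h s φ := by
  induction φ generalizing s with
  | eqf x y => simp only [foSat, slSat, hfh (s x) (hs x), Option.some.injEq]
  | eq x y => rfl
  | neg φ ih => exact not_congr (ih hs)
  | conj φ ψ ihφ ihψ => exact and_congr (ihφ hs) (ihψ hs)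
  | ex x φ ih =>
    exact exists_congr fun e => and_congr_right fun he => ih (forall_update_mem hs x he)
  | all x φ ih =>
    exact forall_congr' fun e => imp_congr_right fun he => ih (forall_update_mem hs x he)

lemma mem_dom1_of_eq_some {h : L → Option L} {l m : L} (hl : h l = some m) : l ∈ dom1 h := by
  simp [dom1, hl]

section restrictHeap

open Classical in
noncomputable def restrictHeap (D : Set L) (f : L → L) (l : L) : Option L :=
  if l ∈ D then some (f l) else none

variable {D : Set L} {f : L → L}

lemma restrictHeap_of_mem {l : L} (hl : l ∈ D) : restrictHeap D f l = some (f l) := by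
  simp [restrictHeap, hl]

lemma restrictHeap_eq_some {l m : L} (hlm : restrictHeap D f l = some m) :
    l ∈ D ∧ f l = m := by
  unfold restrictHeap at hlm
  split_ifs at hlm with hl
  exact ⟨hl, Option.some.inj hlm⟩

lemma elem1_restrictHeap_subset (hf : Set.MapsTo f D D) : elem1 (restrictHeap D f) ⊆ D := by
  rintro l (hl | ⟨l', hl'⟩)
  · obtain ⟨m, hm⟩ := Option.ne_none_iff_exists'.mp hl
    exact (restrictHeap_eq_some hm).1
  · obtain ⟨hl'D, rfl⟩ := restrictHeap_eq_some hl'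
    exact hf hl'D

end restrictHeap

section heapFun

/-- The function read off a heap; `d` is a junk value outside `dom1 h`. -/
def heapFun (h : L → Option L) (d : L) (l : L) : L :=
  (h l).getD d

variable {h : L → Option L} {d : L}

lemma heapFun_spec {l : L} (hl : l ∈ dom1 h) : h l = some (heapFun h d l) := by
  obtain ⟨m, hm⟩ := Option.ne_none_iff_exists'.mp hl
  simp [heapFun, hm]

lemma mapsTo_heapFun {U : Set L} (halloc : ∀ l ∈ U, l ∈ dom1 h) (helem : elem1 h ⊆ U) :
    Set.MapsTo (heapFun h d) U U :=
  fun l hl => helem (Or.inr ⟨l, heapFun_spec (halloc l hl)⟩)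

end heapFun

/-- a flattened FO sentence φ with one unary function has a finite
model iff its translation, conjoined with the axiom ∀x. alloc(x), has a finite
SL(1) model (countable universes encoded over ℕ). -/
theorem fo_to_sl_finite (φ : FO1) :
    (∃ (D : Set ℕ) (f : ℕ → ℕ) (s : ℕ → ℕ),
        D.Finite ∧ D.Nonempty ∧ (∀ l ∈ D, f l ∈ D) ∧ (∀ x, s x ∈ D) ∧
        foSat D f s φ)
    ↔
    (∃ (U : Set ℕ) (h : ℕ → Option ℕ) (s : ℕ → ℕ),
        U.Finite ∧ U.Nonempty ∧ elem1 h ⊆ U ∧ (∀ x, s x ∈ U) ∧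
        (∀ l ∈ U, l ∈ dom1 h) ∧   -- the axiom ∀x. alloc(x)
        slSat U h s φ) := by
  constructor
  · rintro ⟨D, f, s, hD, hne, hf, hs, hsat⟩
    exact ⟨D, restrictHeap D f, s, hD, hne, elem1_restrictHeap_subset hf, hs,
      fun l hl => mem_dom1_of_eq_some (restrictHeap_of_mem hl),
      (foSat_iff_slSat (fun _ => restrictHeap_of_mem) hs φ).mp hsat⟩
  · rintro ⟨U, h, s, hU, hne, helem, hs, halloc, hsat⟩
    exact ⟨U, heapFun h 0, s, hU, hne, mapsTo_heapFun halloc helem, hs,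
      (foSat_iff_slSat (fun _ hl => heapFun_spec (halloc _ hl)) hs φ).mpr hsat⟩
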